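/- The difference between the observed group mean and the observed population mean satisfies μ_g^O − μ^O = (α_{¬g}(1−r_g)/α) · [ ρ_g · √((1−α_g)/α_g) · σ_{X|G} + μ_g − μ_{¬g} − ρ_{¬g} · √((1−α_{¬g})/α_{¬g}) · σ_{X|Gᶜ} ], where α = r_g α_g + (1−r_g) α_{¬g}; consequently the population imputation bias decomposes as B_g^{pop} = B_g^{group} + (α_{¬g}(1−r_g)/α) · [ ρ_g √((1−α_g)/α_g) σ_{X|G} + μ_g − μ_{¬g} − ρ_{¬g} √((1−α_{¬g})/α_{¬g}) σ_{X|Gᶜ} ]. -/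

import Mathlib

/-! Since `O` is `{0,1}`-valued, `Cov(O, X | G) = α_g (μ_g^O − μ_g)`, so the correlation term
`ρ_g √((1 − α_g)/α_g) σ_{X|G}` is just `μ_g^O − μ_g`, likewise for `Gᶜ`, and the bracket equals
`μ_g^O − μ_{¬g}^O`. On the other hand `μ^O` is the average of `μ_g^O` and `μ_{¬g}^O` with
weights `r_g α_g` and `(1 − r_g) α_{¬g}`, which sum to `α`; hence
`μ_g^O − μ^O = ((1 − r_g) α_{¬g} / α) (μ_g^O − μ_{¬g}^O)`. -/

open MeasureTheory ProbabilityTheory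

/-- Covariance of two real random variables under the measure `μ`. -/
noncomputable def condCov {Ω : Type*} [MeasurableSpace Ω] (μ : Measure Ω) (O X : Ω → ℝ) : ℝ :=
  ∫ ω, (O ω - ∫ x, O x ∂μ) * (X ω - ∫ x, X x ∂μ) ∂μ

theorem condCov_eq_covariance {Ω : Type*} [MeasurableSpace Ω] (μ : Measure Ω) (O X : Ω → ℝ) :
    condCov μ O X = cov[O, X; μ] := rfl

theorem div_sqrt_mul_sqrt_mul {p σ : ℝ} (C : ℝ) (hp0 : 0 < p) (hp1 : p < 1) (hσ : σ ≠ 0) :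
    C / (√(p * (1 - p)) * σ) * √((1 - p) / p) * σ = C / p := by
  have hp : √p ≠ 0 := (Real.sqrt_pos.mpr hp0).ne'
  have hq : √(1 - p) ≠ 0 := (Real.sqrt_pos.mpr (by linarith)).ne'
  rw [Real.sqrt_mul hp0.le, Real.sqrt_div (by linarith)]
  field_simp
  rw [Real.sq_sqrt hp0.le]

theorem eq_indicator_preimage_one {α : Type*} {O : α → ℝ} (hO : ∀ ω, O ω = 0 ∨ O ω = 1) :
    O = (O ⁻¹' {1}).indicator 1 := by
  funext ω
  rcases hO ω with h | h <;> simp [h]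

theorem mul_eq_indicator_preimage_one {α : Type*} {O : α → ℝ} (hO : ∀ ω, O ω = 0 ∨ O ω = 1)
    (X : α → ℝ) : O * X = (O ⁻¹' {1}).indicator X := by
  funext ω
  rcases hO ω with h | h <;> simp [h]

theorem MeasureTheory.MemLp.cond {Ω : Type*} [MeasurableSpace Ω] {f : Ω → ℝ} {p : ENNReal}
    {μ : Measure Ω} {s : Set Ω} (hs : μ s ≠ 0) (hf : MemLp f p μ) : MemLp f p μ[|s] :=
  (hf.restrict s).smul_measure (ENNReal.inv_ne_top.2 hs)

namespace ProbabilityTheory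

variable {Ω : Type*} [MeasurableSpace Ω]

theorem measureReal_mul_integral_cond (μ : Measure Ω) [IsFiniteMeasure μ] (s : Set Ω)
    (f : Ω → ℝ) : μ.real s * ∫ ω, f ω ∂μ[|s] = ∫ ω in s, f ω ∂μ := by
  rcases eq_or_ne (μ s) 0 with hs | hs
  · simp [Measure.real, hs, setIntegral_measure_zero _ hs]
  · rw [cond, integral_smul_measure, ENNReal.toReal_inv, smul_eq_mul, ← mul_assoc,
      measureReal_def, mul_inv_cancel₀ (ENNReal.toReal_ne_zero.mpr ⟨hs, measure_ne_top μ s⟩),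
      one_mul]

theorem measureReal_mul_integral_cond_eq_add_compl (μ : Measure Ω) [IsFiniteMeasure μ]
    {s G : Set Ω} (hG : MeasurableSet G) {f : Ω → ℝ} (hf : Integrable f μ) :
    μ.real s * ∫ ω, f ω ∂μ[|s] =
      μ.real (s ∩ G) * ∫ ω, f ω ∂μ[|s ∩ G] + μ.real (s ∩ Gᶜ) * ∫ ω, f ω ∂μ[|s ∩ Gᶜ] := by
  simp only [measureReal_mul_integral_cond]
  rw [← integral_add_compl hG hf.integrableOn, Measure.restrict_restrict hG,
    Measure.restrict_restrict hG.compl, Set.inter_comm G, Set.inter_comm Gᶜ]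

section ZeroOne

variable {O : Ω → ℝ} (hO : ∀ ω, O ω = 0 ∨ O ω = 1) (hOm : Measurable O)
include hO hOm

theorem integral_of_zero_or_one (ν : Measure Ω) : ∫ ω, O ω ∂ν = ν.real (O ⁻¹' {1}) := by
  conv_lhs => rw [eq_indicator_preimage_one hO]
  exact integral_indicator_one (hOm (measurableSet_singleton 1))

theorem measureReal_mul_integral_cond_of_zero_or_one (μ : Measure Ω) [IsFiniteMeasure μ]
    {G : Set Ω} : μ.real G * ∫ ω, O ω ∂μ[|G] = μ.real (O ⁻¹' {1} ∩ G) := by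
  rw [measureReal_mul_integral_cond, integral_of_zero_or_one hO hOm,
    measureReal_restrict_apply (hOm (measurableSet_singleton 1))]

theorem covariance_of_zero_or_one (ν : Measure Ω) [IsProbabilityMeasure ν] {X : Ω → ℝ}
    (hX : MemLp X 2 ν) :
    cov[O, X; ν] = ν.real (O ⁻¹' {1}) * (∫ ω, X ω ∂ν[|O ⁻¹' {1}] - ∫ ω, X ω ∂ν) := by
  have hs : MeasurableSet (O ⁻¹' {1}) := hOm (measurableSet_singleton 1)
  have hOLp : MemLp O 2 ν := by
    rw [eq_indicator_preimage_one hO]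
    exact (memLp_const 1).indicator hs
  rw [covariance_eq_sub hOLp hX, mul_eq_indicator_preimage_one hO, mul_sub,
    measureReal_mul_integral_cond, integral_indicator hs, integral_of_zero_or_one hO hOm]

theorem covariance_cond_div_sqrt_mul_sqrt_mul (μ : Measure Ω) [IsFiniteMeasure μ]
    {G : Set Ω} (hG : MeasurableSet G) (hG0 : μ G ≠ 0) {X : Ω → ℝ} (hX : MemLp X 2 μ)
    {σ : ℝ} (hσ : σ ≠ 0) (hp0 : 0 < ∫ ω, O ω ∂μ[|G]) (hp1 : ∫ ω, O ω ∂μ[|G] < 1) :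
    cov[O, X; μ[|G]] / (√((∫ ω, O ω ∂μ[|G]) * (1 - ∫ ω, O ω ∂μ[|G])) * σ) *
        √((1 - ∫ ω, O ω ∂μ[|G]) / ∫ ω, O ω ∂μ[|G]) * σ =
      ∫ ω, X ω ∂μ[|O ⁻¹' {1} ∩ G] - ∫ ω, X ω ∂μ[|G] := by
  have := cond_isProbabilityMeasure (s := G) hG0
  rw [div_sqrt_mul_sqrt_mul _ hp0 hp1 hσ, covariance_of_zero_or_one hO hOm _ (hX.cond hG0),
    ← integral_of_zero_or_one hO hOm, mul_div_cancel_left₀ _ hp0.ne',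
    cond_cond_eq_cond_inter hG (hOm (measurableSet_singleton 1)), Set.inter_comm]

end ZeroOne

end ProbabilityTheory

theorem population_bias_decomposition_general
    {Ω : Type*} [MeasurableSpace Ω] (μ : Measure Ω) [IsProbabilityMeasure μ]
    (X O : Ω → ℝ) (G : Set Ω)
    (hOm : Measurable O) (hG : MeasurableSet G)
    (hX2 : MemLp X 2 μ)
    (hO01 : ∀ ω, O ω = 0 ∨ O ω = 1)
    (αg αng μg μng μgO μngO μO σXG σXnG ρg ρng rg α BgGroup BgPop : ℝ)
    (hαg : αg = ∫ ω, O ω ∂(μ[|G]))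
    (hαng : αng = ∫ ω, O ω ∂(μ[|Gᶜ]))
    (hμg : μg = ∫ ω, X ω ∂(μ[|G]))
    (hμng : μng = ∫ ω, X ω ∂(μ[|Gᶜ]))
    (hμgO : μgO = ∫ ω, X ω ∂(μ[|O ⁻¹' {1} ∩ G]))
    (hμngO : μngO = ∫ ω, X ω ∂(μ[|O ⁻¹' {1} ∩ Gᶜ]))
    (hμO : μO = ∫ ω, X ω ∂(μ[|O ⁻¹' {1}]))
    (hρg : ρg = condCov (μ[|G]) O X / (Real.sqrt (αg * (1 - αg)) * σXG))
    (hρng : ρng = condCov (μ[|Gᶜ]) O X / (Real.sqrt (αng * (1 - αng)) * σXnG))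
    (hrg : rg = (μ G).toReal)
    (hα : α = ∫ ω, O ω ∂μ)
    (hBgGroup : BgGroup = (∫ ω, X ω ∂(μ[|O ⁻¹' {0} ∩ G])) - μgO)
    (hBgPop : BgPop = (∫ ω, X ω ∂(μ[|O ⁻¹' {0} ∩ G])) - μO)
    (hr0 : 0 < rg) (hr1 : rg < 1)
    (hαg0 : 0 < αg) (hαg1 : αg < 1)
    (hαng0 : 0 < αng) (hαng1 : αng < 1)
    (hσpos : 0 < σXG) (hσnpos : 0 < σXnG) :
    μgO - μO = (αng * (1 - rg) / α) *
        (ρg * Real.sqrt ((1 - αg) / αg) * σXG + μg - μng -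
          ρng * Real.sqrt ((1 - αng) / αng) * σXnG) ∧
    BgPop = BgGroup + (αng * (1 - rg) / α) *
        (ρg * Real.sqrt ((1 - αg) / αg) * σXG + μg - μng -
          ρng * Real.sqrt ((1 - αng) / αng) * σXnG) := by
  have hrgc : 1 - rg = μ.real Gᶜ := by rw [hrg, measureReal_compl hG, probReal_univ]; rfl
  have hG0 : μ G ≠ 0 := fun h ↦ by simp [hrg, h] at hr0
  have hGc0 : μ Gᶜ ≠ 0 := fun h ↦ by simp [Measure.real, h] at hrgc; linarith
  have hρg' : ρg * √((1 - αg) / αg) * σXG = μgO - μg := by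
    rw [hρg, condCov_eq_covariance, hαg, hμg, hμgO]
    exact covariance_cond_div_sqrt_mul_sqrt_mul hO01 hOm μ hG hG0 hX2 hσpos.ne'
      (hαg ▸ hαg0) (hαg ▸ hαg1)
  have hρng' : ρng * √((1 - αng) / αng) * σXnG = μngO - μng := by
    rw [hρng, condCov_eq_covariance, hαng, hμng, hμngO]
    exact covariance_cond_div_sqrt_mul_sqrt_mul hO01 hOm μ hG.compl hGc0 hX2 hσnpos.ne'
      (hαng ▸ hαng0) (hαng ▸ hαng1)
  have hpg : rg * αg = μ.real (O ⁻¹' {1} ∩ G) := by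
    rw [hrg, hαg, ← measureReal_def, measureReal_mul_integral_cond_of_zero_or_one hO01 hOm]
  have hpng : (1 - rg) * αng = μ.real (O ⁻¹' {1} ∩ Gᶜ) := by
    rw [hrgc, hαng, measureReal_mul_integral_cond_of_zero_or_one hO01 hOm]
  have hαs : α = μ.real (O ⁻¹' {1}) := by rw [hα, integral_of_zero_or_one hO01 hOm]
  have hα_eq : α = rg * αg + (1 - rg) * αng := by
    rw [hαs, hpg, hpng]
    exact (measureReal_inter_add_sdiff hG).symm
  have hμO_eq : α * μO = rg * αg * μgO + (1 - rg) * αng * μngO := by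
    rw [hαs, hμO, hpg, hpng, hμgO, hμngO]
    exact measureReal_mul_integral_cond_eq_add_compl μ hG (hX2.integrable one_le_two)
  have hα0 : 0 < α := by rw [hα_eq]; nlinarith
  have hgap : μgO - μO = αng * (1 - rg) / α * (μgO - μngO) := by
    rw [div_mul_eq_mul_div, eq_div_iff hα0.ne']
    linear_combination μgO * hα_eq - hμO_eq
  rw [hρg', hρng', hBgPop, hBgGroup]
  constructor <;> linear_combination hgap

/-- Decomposition of `μ_g^O − μ^O` and of the population imputation bias
`B_g^pop` in terms of the missingness processes of the two groups. -/
theorem population_bias_decomposition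
    {Ω : Type*} [MeasurableSpace Ω] (μ : Measure Ω) [IsProbabilityMeasure μ]
    (X O : Ω → ℝ) (G : Set Ω)
    (hXm : Measurable X) (hOm : Measurable O) (hG : MeasurableSet G)
    (hX2 : MemLp X 2 μ)
    (hO01 : ∀ ω, O ω = 0 ∨ O ω = 1)
    (αg αng μg μng μgO μngO μO σXG σXnG ρg ρng rg α BgGroup BgPop : ℝ)
    (hαg : αg = ∫ ω, O ω ∂(μ[|G]))
    (hαng : αng = ∫ ω, O ω ∂(μ[|Gᶜ]))
    (hμg : μg = ∫ ω, X ω ∂(μ[|G]))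
    (hμng : μng = ∫ ω, X ω ∂(μ[|Gᶜ]))
    (hμgO : μgO = ∫ ω, X ω ∂(μ[|O ⁻¹' {1} ∩ G]))
    (hμngO : μngO = ∫ ω, X ω ∂(μ[|O ⁻¹' {1} ∩ Gᶜ]))
    (hμO : μO = ∫ ω, X ω ∂(μ[|O ⁻¹' {1}]))
    (hσXG : σXG = Real.sqrt (variance X (μ[|G])))
    (hσXnG : σXnG = Real.sqrt (variance X (μ[|Gᶜ])))
    (hρg : ρg = condCov (μ[|G]) O X / (Real.sqrt (αg * (1 - αg)) * σXG))
    (hρng : ρng = condCov (μ[|Gᶜ]) O X / (Real.sqrt (αng * (1 - αng)) * σXnG))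
    (hrg : rg = (μ G).toReal)
    (hα : α = ∫ ω, O ω ∂μ)
    (hBgGroup : BgGroup = (∫ ω, X ω ∂(μ[|O ⁻¹' {0} ∩ G])) - μgO)
    (hBgPop : BgPop = (∫ ω, X ω ∂(μ[|O ⁻¹' {0} ∩ G])) - μO)
    (hr0 : 0 < rg) (hr1 : rg < 1)
    (hαg0 : 0 < αg) (hαg1 : αg < 1)
    (hαng0 : 0 < αng) (hαng1 : αng < 1)
    (hσpos : 0 < σXG) (hσnpos : 0 < σXnG)
    (hpos1g : 0 < μ (O ⁻¹' {1} ∩ G)) (hpos0g : 0 < μ (O ⁻¹' {0} ∩ G))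
    (hpos1ng : 0 < μ (O ⁻¹' {1} ∩ Gᶜ)) :
    μgO - μO = (αng * (1 - rg) / α) *
        (ρg * Real.sqrt ((1 - αg) / αg) * σXG + μg - μng -
          ρng * Real.sqrt ((1 - αng) / αng) * σXnG) ∧
    BgPop = BgGroup + (αng * (1 - rg) / α) *
        (ρg * Real.sqrt ((1 - αg) / αg) * σXG + μg - μng -
          ρng * Real.sqrt ((1 - αng) / αng) * σXnG) :=
  population_bias_decomposition_general μ X O G hOm hG hX2 hO01 αg αng μg μng μgO μngO μO σXG σXnG
    ρg ρng rg α BgGroup BgPop hαg hαng hμg hμng hμgO hμngO hμO hρg hρng hrg hα hBgGroup hBgPop hr0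
    hr1 hαg0 hαg1 hαng0 hαng1 hσpos hσnpos
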